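/- Let (X,d) be a nonempty complete bounded metric space and T : X → X a continuous map for which there exists q ∈ [0,1) such that, with X_0 = X and X_{i+1} = T(X_i), one has diam(X_{i+1}) ≤ q · diam(X_i) for all i. Then the limit of the iteration is independent of the initial point: for any x_0, y_0 ∈ X, the sequences T^n(x_0) and T^n(y_0) converge to the same point, namely the unique fixed point x* of T. -/

import Mathlib

/-! The images `Xₙ = Tⁿ(X)` are nested and their diameters decay geometrically, so any two orbit
points `Tⁿ x`, `Tᵐ y` with `n, m ≥ N` lie in `X_N` and are `diam X_N`-close. Hence every orbit is
Cauchy and all orbits share one limit, which is fixed by continuity; a fixed point is its own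
orbit's limit, so it is that common limit. -/

/-- The iterated image sets: `iterImage T 0 = univ`, `iterImage T (i+1) = T '' iterImage T i`. -/
def iterImage {X : Type*} (T : X → X) : ℕ → Set X
  | 0 => Set.univ
  | (i + 1) => T '' iterImage T i

open Filter Topology Metric

section IterImage

variable {X : Type*} (T : X → X)

theorem iterate_mem_iterImage (x : X) : ∀ n, T^[n] x ∈ iterImage T n
  | 0 => Set.mem_univ x
  | n + 1 => by
    rw [Function.iterate_succ_apply']
    exact Set.mem_image_of_mem T (iterate_mem_iterImage x n)

theorem iterImage_succ_subset : ∀ n, iterImage T (n + 1) ⊆ iterImage T n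
  | 0 => Set.subset_univ _
  | n + 1 => Set.image_mono (iterImage_succ_subset n)

theorem iterImage_antitone : Antitone (iterImage T) :=
  antitone_nat_of_succ_le (iterImage_succ_subset T)

variable [PseudoMetricSpace X] {T}

theorem tendsto_diam_iterImage_zero {q : ℝ} (hq0 : 0 ≤ q) (hq1 : q < 1)
    (hd : ∀ i, diam (iterImage T (i + 1)) ≤ q * diam (iterImage T i)) :
    Tendsto (fun n => diam (iterImage T n)) atTop (𝓝 0) := by
  have hgeom : Tendsto (fun n => q ^ n * diam (iterImage T 0)) atTop (𝓝 0) := by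
    simpa using (tendsto_pow_atTop_nhds_zero_of_lt_one hq0 hq1).mul_const _
  have hle (n : ℕ) : diam (iterImage T n) ≤ q ^ n * diam (iterImage T 0) :=
    le_geom (u := fun n => diam (iterImage T n)) hq0 n fun k _ => hd k
  exact squeeze_zero (fun _ => diam_nonneg) hle hgeom

theorem dist_iterate_le_diam_iterImage (hbdd : Bornology.IsBounded (Set.univ : Set X))
    (x y : X) {N n m : ℕ} (hn : N ≤ n) (hm : N ≤ m) :
    dist (T^[n] x) (T^[m] y) ≤ diam (iterImage T N) :=
  dist_le_diam_of_mem (hbdd.subset (Set.subset_univ _))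
    (iterImage_antitone T hn (iterate_mem_iterImage T x n))
    (iterImage_antitone T hm (iterate_mem_iterImage T y m))

theorem cauchySeq_iterate (hbdd : Bornology.IsBounded (Set.univ : Set X))
    (hdiam : Tendsto (fun n => diam (iterImage T n)) atTop (𝓝 0)) (x : X) :
    CauchySeq fun n => T^[n] x :=
  cauchySeq_of_le_tendsto_0 _ (fun _ _ _ hn hm => dist_iterate_le_diam_iterImage hbdd x x hn hm)
    hdiam

theorem tendsto_dist_iterate (hbdd : Bornology.IsBounded (Set.univ : Set X))
    (hdiam : Tendsto (fun n => diam (iterImage T n)) atTop (𝓝 0)) (x y : X) :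
    Tendsto (fun n => dist (T^[n] x) (T^[n] y)) atTop (𝓝 0) :=
  squeeze_zero (fun _ => dist_nonneg)
    (fun _ => dist_iterate_le_diam_iterImage hbdd x y le_rfl le_rfl) hdiam

end IterImage

/-- for a continuous strong contraction mapping on a nonempty complete bounded
metric space, the iteration converges to the unique fixed point `x*` independently of the
initial point: for any `x₀, y₀`, both `Tⁿ x₀` and `Tⁿ y₀` converge to `x*`. -/
theorem iterate_tendsto_fixedPoint {X : Type*} [MetricSpace X] [CompleteSpace X] [Nonempty X]
    (hbdd : Bornology.IsBounded (Set.univ : Set X))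
    (T : X → X) (hT : Continuous T)
    (hq : ∃ q : ℝ, 0 ≤ q ∧ q < 1 ∧
      ∀ i : ℕ, Metric.diam (iterImage T (i + 1)) ≤ q * Metric.diam (iterImage T i)) :
    ∃ xstar : X, T xstar = xstar ∧ (∀ y : X, T y = y → y = xstar) ∧
      ∀ x₀ : X, Filter.Tendsto (fun n : ℕ => T^[n] x₀) Filter.atTop (nhds xstar) := by
  obtain ⟨q, hq0, hq1, hd⟩ := hq
  have hdiam := tendsto_diam_iterImage_zero hq0 hq1 hd
  let x₁ : X := Classical.arbitrary X
  obtain ⟨xstar, hx₁⟩ := cauchySeq_tendsto_of_complete (cauchySeq_iterate hbdd hdiam x₁)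
  have hall : ∀ x₀ : X, Tendsto (fun n => T^[n] x₀) atTop (𝓝 xstar) := fun x₀ =>
    hx₁.congr_dist (tendsto_dist_iterate hbdd hdiam x₁ x₀)
  refine ⟨xstar, isFixedPt_of_tendsto_iterate hx₁ hT.continuousAt, fun y hy => ?_, hall⟩
  have hconst : Tendsto (fun n => T^[n] y) atTop (𝓝 y) := by
    simp only [Function.iterate_fixed hy, tendsto_const_nhds]
  exact tendsto_nhds_unique hconst (hall y)
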